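/- arXiv:1401.5449 — 2 statements merged into one kernel-verified Lean document; each statement's English description precedes it below -/
import Mathlib

section
/- Let A = Z/m × Z/m and let B ⊆ A be a cyclic subgroup of order m. Then B has a complement B' in A (i.e., A = B × B' internally), B' is cyclic of order m, and the number of distinct such complements B' equals m. -/
/-!
A generator `g = (x, y)` of `B` has order `m`, so no nonzero `r ∈ ZMod m` kills both `x` and `y`;
since `ZMod m` is a finite Bézout ring this forces `a x + c y = 1` for some `a, c`, and the matrix
`[[x, -c], [y, a]]` is an automorphism of `A` carrying `(1, 0)` to `g`. This reduces everything to
`B = ⟨(1, 0)⟩`, whose complements are exactly the `m` graphs `⟨(c, 1)⟩`: writing `(0, 1)` as a sum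
shows that a complement `B'` contains some `(c, 1)`, and by the modular law a complement containing
the complement `⟨(c, 1)⟩` equals it.
-/

open AddSubgroup

theorem exists_mul_add_mul_eq_one_of_forall_mul_eq_zero {R : Type*} [CommRing R]
    [IsArtinianRing R] [IsBezout R] {x y : R} (h : ∀ r : R, r * x = 0 → r * y = 0 → r = 0) :
    ∃ a c : R, a * x + c * y = 1 := by
  obtain ⟨s, hs⟩ := IsBezout.gcd_dvd_left x y
  obtain ⟨t, ht⟩ := IsBezout.gcd_dvd_right x y
  have hunit : IsUnit (IsBezout.gcd x y) := by
    refine IsArtinianRing.isUnit_of_mem_nonZeroDivisors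
      (mem_nonZeroDivisors_iff_right.2 fun r hr => h r ?_ ?_)
    · rw [hs, ← mul_assoc, hr, zero_mul]
    · rw [ht, ← mul_assoc, hr, zero_mul]
  rw [← Ideal.mem_span_pair, ← IsBezout.span_gcd, Ideal.span_singleton_eq_top.2 hunit]
  exact Submodule.mem_top

theorem exists_addEquiv_apply_one_zero {R : Type*} [CommRing R] {x y a c : R}
    (h : a * x + c * y = 1) : ∃ e : (R × R) ≃+ (R × R), e (1, 0) = (x, y) :=
  ⟨{ toFun p := (x * p.1 - c * p.2, y * p.1 + a * p.2)
     invFun p := (a * p.1 + c * p.2, x * p.2 - y * p.1)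
     left_inv p := by
       ext
       · linear_combination p.1 * h
       · linear_combination p.2 * h
     right_inv p := by
       ext
       · linear_combination p.1 * h
       · linear_combination p.2 * h
     map_add' p q := by ext <;> simp only [Prod.fst_add, Prod.snd_add] <;> ring },
   by ext <;> simp⟩

theorem IsCompl.eq_of_le {α : Type*} [Lattice α] [BoundedOrder α] [IsModularLattice α]
    {a b c : α} (hb : IsCompl a b) (hc : IsCompl a c) (hbc : b ≤ c) : b = c :=
  eq_of_le_of_inf_le_of_sup_le (z := a) hbc (by rw [hb.symm.inf_eq_bot, hc.symm.inf_eq_bot])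
    (by rw [hb.symm.sup_eq_top, hc.symm.sup_eq_top])

section ZModProd

variable {m : ℕ}

instance ZMod.instIsBezout : IsBezout (ZMod m) :=
  ZMod.intCast_surjective.isBezout (Int.castRingHom (ZMod m))

theorem forall_mul_eq_zero_of_addOrderOf_eq {x y : ZMod m}
    (h : addOrderOf (x, y) = m) (r : ZMod m) (hx : r * x = 0) (hy : r * y = 0) : r = 0 := by
  have hdvd : (addOrderOf (x, y) : ℤ) ∣ r.cast :=
    addOrderOf_dvd_iff_zsmul_eq_zero.2 (by ext <;> simp [zsmul_eq_mul, hx, hy])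
  rw [h] at hdvd
  rw [← ZMod.intCast_zmod_cast r, ZMod.intCast_zmod_eq_zero_iff_dvd]
  exact hdvd

theorem exists_addEquiv_apply_one_zero_of_addOrderOf_eq [NeZero m] {g : ZMod m × ZMod m}
    (hg : addOrderOf g = m) : ∃ e : (ZMod m × ZMod m) ≃+ (ZMod m × ZMod m), e (1, 0) = g := by
  obtain ⟨a, c, hac⟩ :=
    exists_mul_add_mul_eq_one_of_forall_mul_eq_zero (forall_mul_eq_zero_of_addOrderOf_eq hg)
  exact exists_addEquiv_apply_one_zero hac

theorem mem_zmultiples_one_zero_iff (p : ZMod m × ZMod m) :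
    p ∈ zmultiples ((1, 0) : ZMod m × ZMod m) ↔ p.2 = 0 := by
  refine ⟨?_, fun h => ⟨(p.1.cast : ℤ), ?_⟩⟩
  · rintro ⟨k, rfl⟩
    simp
  · ext <;> simp [h]

theorem mem_zmultiples_mk_one_iff (c : ZMod m) (p : ZMod m × ZMod m) :
    p ∈ zmultiples ((c, 1) : ZMod m × ZMod m) ↔ p.1 = c * p.2 := by
  refine ⟨?_, fun h => ⟨(p.2.cast : ℤ), ?_⟩⟩
  · rintro ⟨k, rfl⟩
    simp [zsmul_eq_mul, mul_comm]
  · ext <;> simp [h, zsmul_eq_mul, mul_comm]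

theorem addOrderOf_mk_one (c : ZMod m) : addOrderOf ((c, 1) : ZMod m × ZMod m) = m := by
  rw [Prod.addOrderOf, ZMod.addOrderOf_one]
  have hc := _root_.addOrderOf_dvd_natCard c
  rw [Nat.card_zmod] at hc
  exact Nat.lcm_eq_right hc

theorem zmultiples_mk_one_injective :
    Function.Injective fun c : ZMod m => zmultiples ((c, 1) : ZMod m × ZMod m) := by
  intro c c' h
  have hc : ((c, 1) : ZMod m × ZMod m) ∈ zmultiples (c', 1) := h.le (mem_zmultiples _)
  simpa using (mem_zmultiples_mk_one_iff c' _).1 hc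

theorem isCompl_zmultiples_one_zero_mk_one (c : ZMod m) :
    IsCompl (zmultiples ((1, 0) : ZMod m × ZMod m)) (zmultiples (c, 1)) := by
  refine ⟨disjoint_def.2 fun {p} hp hp' => ?_, codisjoint_iff.2 (eq_top_iff.2 fun p _ => ?_)⟩
  · rw [mem_zmultiples_one_zero_iff] at hp
    rw [mem_zmultiples_mk_one_iff] at hp'
    ext <;> simp [hp, hp']
  · refine mem_sup.2 ⟨(p.1 - c * p.2, 0), ?_, (c * p.2, p.2), ?_, by simp⟩
    · rw [mem_zmultiples_one_zero_iff]
    · rw [mem_zmultiples_mk_one_iff]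

theorem isCompl_zmultiples_one_zero_iff {B' : AddSubgroup (ZMod m × ZMod m)} :
    IsCompl (zmultiples ((1, 0) : ZMod m × ZMod m)) B' ↔ ∃ c : ZMod m, zmultiples (c, 1) = B' := by
  refine ⟨fun h => ?_, fun ⟨c, hc⟩ => hc ▸ isCompl_zmultiples_one_zero_mk_one c⟩
  obtain ⟨y, hy, z, hz, hyz⟩ := mem_sup.1 (h.codisjoint.eq_top ▸ mem_top ((0, 1) : ZMod m × ZMod m))
  have hz2 : z.2 = 1 := by
    simpa [(mem_zmultiples_one_zero_iff y).1 hy] using congrArg Prod.snd hyz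
  refine ⟨z.1, (isCompl_zmultiples_one_zero_mk_one z.1).eq_of_le h ?_⟩
  rw [zmultiples_le, ← hz2]
  exact hz

theorem zmultiples_apply_eq_mapAddSubgroup (e : (ZMod m × ZMod m) ≃+ (ZMod m × ZMod m))
    (p : ZMod m × ZMod m) : zmultiples (e p) = e.mapAddSubgroup (zmultiples p) := by
  simp [AddMonoidHom.map_zmultiples]

theorem isCompl_zmultiples_apply_one_zero_iff (e : (ZMod m × ZMod m) ≃+ (ZMod m × ZMod m))
    {B' : AddSubgroup (ZMod m × ZMod m)} :
    IsCompl (zmultiples (e (1, 0))) B' ↔ ∃ c : ZMod m, zmultiples (e (c, 1)) = B' := by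
  rw [← e.mapAddSubgroup.apply_symm_apply B', zmultiples_apply_eq_mapAddSubgroup,
    ← OrderIso.isCompl_iff, isCompl_zmultiples_one_zero_iff]
  simp only [zmultiples_apply_eq_mapAddSubgroup, e.mapAddSubgroup.injective.eq_iff]

theorem zmultiples_apply_mk_one_injective (e : (ZMod m × ZMod m) ≃+ (ZMod m × ZMod m)) :
    Function.Injective fun c : ZMod m => zmultiples (e (c, 1)) := by
  simp only [zmultiples_apply_eq_mapAddSubgroup]
  exact e.mapAddSubgroup.injective.comp zmultiples_mk_one_injective

end ZModProd

/-- A cyclic subgroup `B` of order `m` in `A = ZMod m × ZMod m` has a complement `B'`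
(`A = B × B'` internally), any such complement is cyclic of order `m`, and the number of
distinct complements of `B` equals `m`. -/
theorem stmt3 (m : ℕ) (hm : 0 < m) (B : AddSubgroup (ZMod m × ZMod m))
    (hBcyc : IsAddCyclic B) (hBcard : Nat.card B = m) :
    (∃ B' : AddSubgroup (ZMod m × ZMod m), IsCompl B B') ∧
    (∀ B' : AddSubgroup (ZMod m × ZMod m), IsCompl B B' →
      IsAddCyclic B' ∧ Nat.card B' = m) ∧
    Nat.card {B' : AddSubgroup (ZMod m × ZMod m) // IsCompl B B'} = m := by
  have : NeZero m := ⟨hm.ne'⟩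
  obtain ⟨g, rfl⟩ := (AddSubgroup.isAddCyclic_iff_exists_zmultiples_eq_top B).1 hBcyc
  rw [Nat.card_zmultiples] at hBcard
  obtain ⟨e, rfl⟩ := exists_addEquiv_apply_one_zero_of_addOrderOf_eq hBcard
  simp only [isCompl_zmultiples_apply_one_zero_iff]
  refine ⟨⟨_, 0, rfl⟩, ?_, ?_⟩
  · rintro _ ⟨c, rfl⟩
    exact ⟨inferInstance, by rw [Nat.card_zmultiples, e.addOrderOf_eq, addOrderOf_mk_one]⟩
  · have hbij : Function.Bijective fun c : ZMod m =>
        (⟨_, c, rfl⟩ : {B' // ∃ c, zmultiples (e (c, 1)) = B'}) := by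
      refine ⟨fun c c' h => ?_, fun ⟨_, c, hc⟩ => ⟨c, Subtype.ext hc⟩⟩
      exact zmultiples_apply_mk_one_injective e (congrArg Subtype.val h)
    rw [← Nat.card_congr (Equiv.ofBijective _ hbij), Nat.card_zmod]
end

section
/- Fix a uniformizer π of a non-archimedean local field F with unit group U. The assignment η ↦ X_η, where X_η(π^a ε₁, π^b ε₂) := η(ε₁)^b · η(ε₂)^{-a}, defines a bijection between characters η of U and U-isotropic alternating characters X on F^× (those with X(U,U) ≡ 1), with inverse X ↦ η_X, η_X(ε) := X(ε, π). Moreover this bijection does not depend on the choice of uniformizer π. -/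
/- We model `F^× ≅ ⟨π⟩ × U` as `Multiplicative ℤ × U`, where `U` is the unit group.
A uniformizer is an element whose first component (its valuation) is `1`. -/

/-- The unit part of `x` with respect to a uniformizer `π`: the `U`-component of
`x · π^{-v(x)}`. -/
def unitPart {U : Type*} [CommGroup U] (π x : Multiplicative ℤ × U) : U :=
  (x * π ^ (-(Multiplicative.toAdd x.1))).2

/-- The alternating character `X_η` attached to a character `η` of `U`:
`X_η(π^a ε₁, π^b ε₂) = η(ε₁)^b · η(ε₂)^{-a}`. -/
def Xeta {U : Type*} [CommGroup U] (π : Multiplicative ℤ × U) (η : U →* ℂˣ)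
    (x y : Multiplicative ℤ × U) : ℂˣ :=
  η (unitPart π x) ^ Multiplicative.toAdd y.1 *
    (η (unitPart π y) ^ Multiplicative.toAdd x.1)⁻¹

/-- `X` is a `U`-isotropic alternating character: bimultiplicative, alternating, and
trivial on `U × U`. -/
def IsUIsotropicAlt {U : Type*} [CommGroup U]
    (X : Multiplicative ℤ × U → Multiplicative ℤ × U → ℂˣ) : Prop :=
  (∀ x y z, X (x * y) z = X x z * X y z) ∧
  (∀ x y z, X x (y * z) = X x y * X x z) ∧
  (∀ x, X x x = 1) ∧
  (∀ u v : U, X (1, u) (1, v) = 1)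

/-!
Bimultiplicativity reduces an alternating character `X` to its values on the generators
`π` and `U`: `X(π, π) = 1` because `X` is alternating, `X(U, U) = 1` by isotropy, and
`X(π, ε) = X(ε, π)⁻¹` because alternating forms are skew. Writing `x = π^a ε₁`, `y = π^b ε₂`
this leaves `X(x, y) = X(ε₁, π)^b · X(ε₂, π)^{-a}`, i.e. `X = X_{η_X}`.
Independence of `π`: the unit parts of `x` and `y` differ from `x.2` and `y.2` by the factors
`π.2^{-a}` and `π.2^{-b}`, whose contributions `η(π.2)^{-ab}` and `η(π.2)^{ab}` cancel in `X_η`.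
-/

open Multiplicative

section Bimultiplicative

variable {G M : Type*} [Group G] [CommGroup M]

lemma zpow_left_of_mul_left {X : G → G → M} (hX : ∀ x y z, X (x * y) z = X x z * X y z)
    (x y : G) (n : ℤ) : X (x ^ n) y = X x y ^ n :=
  map_zpow (MonoidHom.mk' (X · y) (hX · · y)) x n

lemma zpow_right_of_mul_right {X : G → G → M} (hX : ∀ x y z, X x (y * z) = X x y * X x z)
    (x y : G) (n : ℤ) : X x (y ^ n) = X x y ^ n :=
  map_zpow (MonoidHom.mk' (X x) (hX x)) y n

lemma swap_eq_inv_of_alternating {X : G → G → M}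
    (hl : ∀ x y z, X (x * y) z = X x z * X y z) (hr : ∀ x y z, X x (y * z) = X x y * X x z)
    (halt : ∀ x, X x x = 1) (x y : G) : X y x = (X x y)⁻¹ := by
  refine eq_inv_of_mul_eq_one_right ?_
  calc X x y * X y x = X x x * X x y * (X y x * X y y) := by rw [halt, halt, one_mul, mul_one]
    _ = X (x * y) (x * y) := by rw [hl, hr, hr]
    _ = 1 := halt _

end Bimultiplicative

section UnitGroup

variable {U : Type*} [CommGroup U]

lemma unitPart_eq (π x : Multiplicative ℤ × U) :
    unitPart π x = x.2 * π.2 ^ (-toAdd x.1) := rfl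

lemma Xeta_apply (π : Multiplicative ℤ × U) (η : U →* ℂˣ) (x y : Multiplicative ℤ × U) :
    Xeta π η x y = η x.2 ^ toAdd y.1 * (η y.2 ^ toAdd x.1)⁻¹ := by
  simp only [Xeta, unitPart_eq, map_mul, map_zpow, mul_zpow, ← zpow_mul]
  rw [mul_inv, mul_mul_mul_comm, neg_mul, neg_mul, mul_comm (toAdd y.1), mul_inv_cancel, mul_one]

lemma Xeta_eq_Xeta (π π' : Multiplicative ℤ × U) (η : U →* ℂˣ) : Xeta π η = Xeta π' η := by
  funext x y
  rw [Xeta_apply, Xeta_apply]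

lemma isUIsotropicAlt_Xeta (π : Multiplicative ℤ × U) (η : U →* ℂˣ) :
    IsUIsotropicAlt (Xeta π η) := by
  refine ⟨fun x y z => ?_, fun x y z => ?_, fun x => by rw [Xeta_apply, mul_inv_cancel],
    fun u v => by simp [Xeta_apply]⟩ <;>
  · simp only [Xeta_apply, Prod.snd_mul, Prod.fst_mul, toAdd_mul, map_mul, mul_zpow, zpow_add,
      mul_inv]
    ac_rfl

section Uniformizer

variable {π : Multiplicative ℤ × U}

lemma Xeta_apply_unit_uniformizer (hπ : π.1 = ofAdd 1) (η : U →* ℂˣ) (u : U) :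
    Xeta π η (1, u) π = η u := by
  simp [Xeta_apply, hπ]

lemma Xeta_injective (hπ : π.1 = ofAdd 1) : Function.Injective (Xeta (U := U) π) := by
  intro η₁ η₂ h
  ext u : 1
  rw [← Xeta_apply_unit_uniformizer hπ, ← Xeta_apply_unit_uniformizer hπ, h]

lemma eq_zpow_mul_unitPart (hπ : π.1 = ofAdd 1) (z : Multiplicative ℤ × U) :
    z = π ^ toAdd z.1 * (1, unitPart π z) := by
  refine Prod.ext ?_ ?_
  · simp [hπ, ← ofAdd_zsmul]
  · simp only [Prod.snd_mul, Prod.pow_snd, unitPart_eq, zpow_neg]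
    rw [mul_left_comm, mul_inv_cancel, mul_one]

end Uniformizer

namespace IsUIsotropicAlt

variable {X : Multiplicative ℤ × U → Multiplicative ℤ × U → ℂˣ}

def unitChar (hX : IsUIsotropicAlt X) (π : Multiplicative ℤ × U) : U →* ℂˣ :=
  MonoidHom.mk' (fun u => X (1, u) π) fun u v => by
    rw [← hX.1, Prod.mk_mul_mk, one_mul]

lemma apply_zpow_mul_unit (hX : IsUIsotropicAlt X) (π : Multiplicative ℤ × U) (a b : ℤ)
    (ε₁ ε₂ : U) :
    X (π ^ a * (1, ε₁)) (π ^ b * (1, ε₂)) = X (1, ε₁) π ^ b * (X (1, ε₂) π ^ a)⁻¹ := by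
  obtain ⟨hl, hr, halt, hU⟩ := hX
  rw [hl, hr, hr, zpow_left_of_mul_left hl, zpow_left_of_mul_left hl,
    zpow_right_of_mul_right hr, zpow_right_of_mul_right hr, halt, hU, one_zpow, one_zpow,
    swap_eq_inv_of_alternating hl hr halt (1, ε₂), inv_zpow, one_mul, mul_one, mul_comm]

lemma Xeta_unitChar (hX : IsUIsotropicAlt X) {π : Multiplicative ℤ × U}
    (hπ : π.1 = ofAdd 1) : Xeta π (hX.unitChar π) = X := by
  funext x y
  conv_rhs => rw [eq_zpow_mul_unitPart hπ x, eq_zpow_mul_unitPart hπ y, hX.apply_zpow_mul_unit]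
  rfl

end IsUIsotropicAlt

end UnitGroup

/-- For a fixed uniformizer `π`, the map `η ↦ X_η` is a bijection from characters of `U`
onto `U`-isotropic alternating characters, with inverse `X ↦ η_X`, `η_X(ε) = X(ε, π)`;
moreover `X_η` does not depend on the choice of uniformizer. -/
theorem stmt10 {U : Type*} [CommGroup U] (π : Multiplicative ℤ × U)
    (hπ : π.1 = Multiplicative.ofAdd 1) :
    (∀ η : U →* ℂˣ, IsUIsotropicAlt (Xeta π η)) ∧
    (∀ η₁ η₂ : U →* ℂˣ, Xeta π η₁ = Xeta π η₂ → η₁ = η₂) ∧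
    (∀ X, IsUIsotropicAlt X →
      ∃ η : U →* ℂˣ, (∀ u : U, η u = X (1, u) π) ∧ Xeta π η = X) ∧
    (∀ π' : Multiplicative ℤ × U, π'.1 = Multiplicative.ofAdd 1 →
      ∀ η : U →* ℂˣ, Xeta π η = Xeta π' η) :=
  ⟨isUIsotropicAlt_Xeta π, fun _ _ h => Xeta_injective hπ h,
    fun _ hX => ⟨hX.unitChar π, fun _ => rfl, hX.Xeta_unitChar hπ⟩,
    fun π' _ η => Xeta_eq_Xeta π π' η⟩
end
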